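/- arXiv:2512.13720 — 2 statements merged into one kernel-verified Lean document; each statement's English description precedes it below -/
import Mathlib

section
/- Let α, β ∈ ℝ, T > 0. Let F : ℝ × ℝ → ℝ be three times continuously differentiable on a neighbourhood of (ℓ₀, a₀); let L, r, M : ℝ → ℝ be three times continuously differentiable near θ₀ with L(θ₀) = ℓ₀, F(ℓ₀, a₀)·r(θ₀) = M(θ₀), r(θ₀)·∂F/∂a (ℓ₀, a₀) ≠ 0, and r₀ := L'(θ₀) ≠ 0. Let a⁎ : ℝ → ℝ be three times continuously differentiable near θ₀ with a⁎(θ₀) = a₀ and F(L(θ), a⁎(θ))·r(θ) = M(θ) near θ₀, and let Θ : ℝ → ℝ be three times continuously differentiable near ℓ₀ with Θ(ℓ₀) = θ₀ and L(Θ(x)) = x for all x near ℓ₀. Define φ(x) := α·a⁎(Θ(x)) + β·F(x, a⁎(Θ(x))), P₀ := α·a₀ + β·F(ℓ₀, a₀), and C₁ := ( α·a⁎'(θ₀) + β·( ∂F/∂ℓ (ℓ₀,a₀)·r₀ + ∂F/∂a (ℓ₀,a₀)·a⁎'(θ₀) ) ) / r₀. Then there exist a constant C₂ ∈ ℝ (namely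 C₂ = (1/2)·φ''(ℓ₀)), ε > 0 and C ≥ 0 such that for every continuous ℓ : [0,T] → ℝ with ‖ℓ − ℓ₀‖_∞ ≤ ε one has |∫₀ᵀ φ(ℓ(t)) dt − P₀·T − C₁·Δ𝒜_ℓ − C₂·∫₀ᵀ (ℓ(t) − ℓ₀)² dt| ≤ C·‖ℓ − ℓ₀‖_∞³. -/
open MeasureTheory Set Filter Metric


lemma taylor2_bound' {f : ℝ → ℝ} {a : ℝ} (hf : ContDiffAt ℝ 3 f a) :
    ∃ ε > (0:ℝ), ∃ K ≥ (0:ℝ),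
      ContinuousOn f (closedBall a ε) ∧
      ∀ x, |x - a| ≤ ε →
        |f x - f a - deriv f a * (x - a) - (1/2) * deriv (deriv f) a * (x - a)^2|
          ≤ K * |x - a|^3 := by
  obtain ⟨u, hu, hfu⟩ := hf.contDiffOn le_rfl (by simp)
  set U := interior u with hUdef
  have hUo : IsOpen U := isOpen_interior
  have haU : a ∈ U := mem_interior_iff_mem_nhds.2 hu
  have hfU : ContDiffOn ℝ 3 f U := hfu.mono interior_subset
  have h1 : ContDiffOn ℝ 2 (deriv f) U := hfU.deriv_of_isOpen hUo (by norm_num)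
  have h2 : ContDiffOn ℝ 1 (deriv (deriv f)) U := h1.deriv_of_isOpen hUo (by norm_num)
  have hd2at : ContDiffAt ℝ 1 (deriv (deriv f)) a :=
    (h2 a haU).contDiffAt (hUo.mem_nhds haU)
  obtain ⟨K, t, ht, hlip⟩ := hd2at.exists_lipschitzOnWith
  obtain ⟨ε, hε, hball⟩ := Metric.mem_nhds_iff.1 (Filter.inter_mem (hUo.mem_nhds haU) ht)
  refine ⟨ε / 2, by linarith, K, K.coe_nonneg, ?_, ?_⟩
  · exact hfU.continuousOn.mono fun y hy => (hball (lt_of_le_of_lt (mem_closedBall.1 hy) (by linarith))).1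
  intro x hx
  set c2 := deriv (deriv f) a with hc2
  set G : ℝ → ℝ := fun y => deriv f y - deriv f a - c2 * (y - a) with hG
  -- facts on the ball
  have hmem : ∀ y : ℝ, |y - a| ≤ ε / 2 → y ∈ U ∩ t := by
    intro y hy
    exact hball (by simpa [Metric.mem_ball, Real.dist_eq] using lt_of_le_of_lt hy (by linarith))
  have hfd : ∀ y : ℝ, |y - a| ≤ ε / 2 → HasDerivAt f (deriv f y) y := fun y hy =>
    ((hfU y (hmem y hy).1).contDiffAt (hUo.mem_nhds (hmem y hy).1)).differentiableAt
      (by norm_num) |>.hasDerivAt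
  have hfd2 : ∀ y : ℝ, |y - a| ≤ ε / 2 → HasDerivAt (deriv f) (deriv (deriv f) y) y := fun y hy =>
    ((h1 y (hmem y hy).1).contDiffAt (hUo.mem_nhds (hmem y hy).1)).differentiableAt
      (by norm_num) |>.hasDerivAt
  -- Lipschitz bound on second deriv
  have hsecond : ∀ y : ℝ, |y - a| ≤ ε / 2 → |deriv (deriv f) y - c2| ≤ K * |y - a| := by
    intro y hy
    have := hlip.dist_le_mul y (hmem y hy).2 a (hmem a (by simpa using le_of_lt (by linarith : (0:ℝ) < ε/2))).2
    simpa [Real.dist_eq] using this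
  -- Step A : |G x| ≤ K |x-a|^2 for |x-a| ≤ ε/2
  have stepA : ∀ x : ℝ, |x - a| ≤ ε / 2 → |G x| ≤ K * |x - a|^2 := by
    intro x hx
    have hsub : uIcc a x ⊆ {y : ℝ | |y - a| ≤ ε / 2} := fun y hy =>
      le_trans (abs_sub_left_of_mem_uIcc hy) (by simpa [abs_sub_comm] using hx)
    have hderiv : ∀ y ∈ uIcc a x, HasDerivWithinAt G (deriv (deriv f) y - c2) (uIcc a x) y := by
      intro y hy
      have h := ((hfd2 y (hsub hy)).sub_const (deriv f a)).sub
        (((hasDerivAt_id y).sub_const a).const_mul c2)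
      have : HasDerivAt G (deriv (deriv f) y - c2) y := by
        exact h.congr_deriv (by ring)
      exact this.hasDerivWithinAt
    have hbound : ∀ y ∈ uIcc a x, ‖deriv (deriv f) y - c2‖ ≤ K * |x - a| := by
      intro y hy
      refine le_trans (hsecond y (hsub hy)) ?_
      have := abs_sub_left_of_mem_uIcc hy
      have h2 : |y - a| ≤ |x - a| := by simpa [abs_sub_comm] using this
      exact mul_le_mul_of_nonneg_left h2 K.coe_nonneg
    have := (convex_uIcc a x).norm_image_sub_le_of_norm_hasDerivWithin_le hderiv hbound
      left_mem_uIcc right_mem_uIcc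
    have hGa : G a = 0 := by simp [hG]
    calc |G x| = ‖G x - G a‖ := by rw [hGa]; simp
    _ ≤ K * |x - a| * ‖x - a‖ := this
    _ = K * |x - a|^2 := by rw [Real.norm_eq_abs]; ring
  -- Step B
  set g : ℝ → ℝ := fun x => f x - f a - deriv f a * (x - a) - (1/2) * c2 * (x - a)^2 with hg
  have hsub : uIcc a x ⊆ {y : ℝ | |y - a| ≤ ε / 2} := fun y hy =>
    le_trans (abs_sub_left_of_mem_uIcc hy) (by simpa [abs_sub_comm] using hx)
  have hderiv : ∀ y ∈ uIcc a x, HasDerivWithinAt g (G y) (uIcc a x) y := by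
    intro y hy
    have h1' := ((hasDerivAt_id y).sub_const a)
    have h := (((hfd y (hsub hy)).sub_const (f a)).sub (h1'.const_mul (deriv f a))).sub
      ((h1'.pow 2).const_mul ((1:ℝ)/2 * c2))
    have : HasDerivAt g (G y) y := by
      exact h.congr_deriv (by rw [eq_comm]; simp [hG]; ring)
    exact this.hasDerivWithinAt
  have hbound : ∀ y ∈ uIcc a x, ‖G y‖ ≤ K * |x - a|^2 := by
    intro y hy
    refine le_trans (stepA y (hsub hy)) ?_
    have h2 : |y - a| ≤ |x - a| := by simpa [abs_sub_comm] using abs_sub_left_of_mem_uIcc hy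
    exact mul_le_mul_of_nonneg_left (pow_le_pow_left₀ (abs_nonneg _) h2 2) K.coe_nonneg
  have := (convex_uIcc a x).norm_image_sub_le_of_norm_hasDerivWithin_le hderiv hbound
    left_mem_uIcc right_mem_uIcc
  have hga : g a = 0 := by simp [hg]
  calc |f x - f a - deriv f a * (x - a) - (1/2) * deriv (deriv f) a * (x - a)^2|
      = ‖g x - g a‖ := by rw [hga]; simp [hg, hc2]
  _ ≤ K * |x - a|^2 * ‖x - a‖ := this
  _ = K * |x - a|^3 := by rw [Real.norm_eq_abs]; ring

/-- Main theorem. For the reduced metabolic power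
`φ(x) = α a⁎(Θ(x)) + β F(x, a⁎(Θ(x)))` of the single-joint muscle–tendon model,
the total metabolic cost admits the expansion
`∫₀ᵀ φ(ℓ(t)) dt = P₀ T + C₁ Δ𝒜_ℓ + C₂ ∫₀ᵀ (ℓ(t) − ℓ₀)² dt + O(‖ℓ − ℓ₀‖_∞³)`,
with `P₀ = α a₀ + β F(ℓ₀,a₀)`,
`C₁ = (α a⁎'(θ₀) + β (F_ℓ r₀ + F_a a⁎'(θ₀))) / r₀`, and
`C₂ = ½ φ''(ℓ₀)`. -/
theorem main_theorem_metabolic_expansion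
    (α β ℓ₀ a₀ θ₀ T : ℝ) (hT : 0 < T)
    (F : ℝ → ℝ → ℝ)
    (hF : ContDiffAt ℝ 3 (fun p : ℝ × ℝ => F p.1 p.2) (ℓ₀, a₀))
    (L r M : ℝ → ℝ)
    (hL : ContDiffAt ℝ 3 L θ₀) (hr : ContDiffAt ℝ 3 r θ₀)
    (hM : ContDiffAt ℝ 3 M θ₀)
    (hL0 : L θ₀ = ℓ₀)
    (hbal : F ℓ₀ a₀ * r θ₀ = M θ₀)
    (hnd : r θ₀ * deriv (fun x => F ℓ₀ x) a₀ ≠ 0)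
    (hr0 : deriv L θ₀ ≠ 0)
    (astar : ℝ → ℝ) (hastar : ContDiffAt ℝ 3 astar θ₀) (ha0 : astar θ₀ = a₀)
    (heq : ∀ᶠ θ in nhds θ₀, F (L θ) (astar θ) * r θ = M θ)
    (Θ : ℝ → ℝ) (hΘ : ContDiffAt ℝ 3 Θ ℓ₀) (hΘ0 : Θ ℓ₀ = θ₀)
    (hinv : ∀ᶠ x in nhds ℓ₀, L (Θ x) = x) :
    ∃ C₂ : ℝ,
      C₂ = (1 / 2)
            * deriv (deriv (fun x => α * astar (Θ x) + β * F x (astar (Θ x)))) ℓ₀ ∧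
      ∃ ε > (0 : ℝ), ∃ C ≥ (0 : ℝ),
        ∀ ℓ : ℝ → ℝ, ContinuousOn ℓ (Icc 0 T) →
          (⨆ t ∈ Icc (0 : ℝ) T, |ℓ t - ℓ₀|) ≤ ε →
          |(∫ t in (0 : ℝ)..T, (α * astar (Θ (ℓ t)) + β * F (ℓ t) (astar (Θ (ℓ t)))))
              - (α * a₀ + β * F ℓ₀ a₀) * T
              - ((α * deriv astar θ₀
                    + β * (deriv (fun x => F x a₀) ℓ₀ * deriv L θ₀
                            + deriv (fun x => F ℓ₀ x) a₀ * deriv astar θ₀))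
                  / deriv L θ₀)
                * (∫ t in (0 : ℝ)..T, (ℓ t - ℓ₀))
              - C₂ * (∫ t in (0 : ℝ)..T, (ℓ t - ℓ₀) ^ 2)|
            ≤ C * (⨆ t ∈ Icc (0 : ℝ) T, |ℓ t - ℓ₀|) ^ 3 := by
  set φ : ℝ → ℝ := fun x => α * astar (Θ x) + β * F x (astar (Θ x)) with hφdef
  -- smoothness of φ at ℓ₀
  have hF' : ContDiffAt ℝ 3 (fun p : ℝ × ℝ => F p.1 p.2) (ℓ₀, astar (Θ ℓ₀)) := by
    rwa [hΘ0, ha0]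
  have hastar' : ContDiffAt ℝ 3 astar (Θ ℓ₀) := by rwa [hΘ0]
  have hΘa : ContDiffAt ℝ 3 (fun x => astar (Θ x)) ℓ₀ := hastar'.comp ℓ₀ hΘ
  have hinner : ContDiffAt ℝ 3 (fun x : ℝ => (x, astar (Θ x))) ℓ₀ :=
    contDiffAt_id.prodMk hΘa
  have hFcomp : ContDiffAt ℝ 3 (fun x => F x (astar (Θ x))) ℓ₀ := by have := hF'.comp ℓ₀ hinner; exact this
  have hφ : ContDiffAt ℝ 3 φ ℓ₀ :=
    (contDiffAt_const.mul hΘa).add (contDiffAt_const.mul hFcomp)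
  -- derivative computations
  set r₀ := deriv L θ₀ with hr₀def
  set a' := deriv astar θ₀ with ha'def
  set Θ' := deriv Θ ℓ₀ with hΘ'def
  have hΘdiff : HasDerivAt Θ Θ' ℓ₀ := (hΘ.differentiableAt (by norm_num)).hasDerivAt
  have hLdiff : HasDerivAt L r₀ (Θ ℓ₀) := by
    rw [hΘ0]; exact (hL.differentiableAt (by norm_num)).hasDerivAt
  have hadiff : HasDerivAt astar a' (Θ ℓ₀) := by
    rw [hΘ0]; exact (hastar.differentiableAt (by norm_num)).hasDerivAt
  have hchain : r₀ * Θ' = 1 := by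
    have hcomp : HasDerivAt (fun x => L (Θ x)) (r₀ * Θ') ℓ₀ := hLdiff.comp ℓ₀ hΘdiff
    have h1 : deriv (fun x => L (Θ x)) ℓ₀ = deriv (fun x : ℝ => x) ℓ₀ :=
      Filter.EventuallyEq.deriv_eq hinv
    rw [hcomp.deriv] at h1
    simpa using h1
  have hg : HasDerivAt (fun x => astar (Θ x)) (a' * Θ') ℓ₀ := hadiff.comp ℓ₀ hΘdiff
  set Fd := fderiv ℝ (fun p : ℝ × ℝ => F p.1 p.2) (ℓ₀, a₀) with hFddef
  have hFdAt : HasFDerivAt (fun p : ℝ × ℝ => F p.1 p.2) Fd (ℓ₀, a₀) :=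
    (hF.differentiableAt (by norm_num)).hasFDerivAt
  have hp1 : deriv (fun x => F x a₀) ℓ₀ = Fd (1, 0) := by
    have hc : HasDerivAt (fun x : ℝ => (x, a₀)) ((1:ℝ), (0:ℝ)) ℓ₀ :=
      (hasDerivAt_id ℓ₀).prodMk (hasDerivAt_const ℓ₀ a₀)
    exact (hFdAt.comp_hasDerivAt ℓ₀ hc).deriv
  have hp2 : deriv (fun y => F ℓ₀ y) a₀ = Fd (0, 1) := by
    have hc : HasDerivAt (fun y : ℝ => (ℓ₀, y)) ((0:ℝ), (1:ℝ)) a₀ :=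
      (hasDerivAt_const a₀ ℓ₀).prodMk (hasDerivAt_id a₀)
    exact (hFdAt.comp_hasDerivAt a₀ hc).deriv
  have hgl0 : astar (Θ ℓ₀) = a₀ := by rw [hΘ0, ha0]
  have hFc : HasDerivAt (fun x => F x (astar (Θ x))) (Fd (1, a' * Θ')) ℓ₀ := by
    have hc : HasDerivAt (fun x : ℝ => (x, astar (Θ x))) ((1:ℝ), a' * Θ') ℓ₀ :=
      (hasDerivAt_id ℓ₀).prodMk hg
    have hFdAt' : HasFDerivAt (fun p : ℝ × ℝ => F p.1 p.2) Fd (ℓ₀, astar (Θ ℓ₀)) := by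
      rwa [hgl0]
    exact hFdAt'.comp_hasDerivAt ℓ₀ hc
  have hφd : HasDerivAt φ (α * (a' * Θ') + β * Fd (1, a' * Θ')) ℓ₀ :=
    (hg.const_mul α).add (hFc.const_mul β)
  have hFdsplit : Fd (1, a' * Θ') = Fd (1, 0) + (a' * Θ') * Fd (0, 1) := by
    have : ((1:ℝ), a' * Θ') = ((1:ℝ), (0:ℝ)) + (a' * Θ') • ((0:ℝ), (1:ℝ)) := by
      simp [Prod.ext_iff]
    rw [this, Fd.map_add, Fd.map_smul, smul_eq_mul]
  have hΘ'val : Θ' = 1 / r₀ := by field_simp at hchain ⊢; linarith [hchain]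
  have hC1 : (α * a' + β * (deriv (fun x => F x a₀) ℓ₀ * r₀
        + deriv (fun x => F ℓ₀ x) a₀ * a')) / r₀ = deriv φ ℓ₀ := by
    rw [hφd.deriv, hp1, hp2, hFdsplit, hΘ'val, div_eq_iff hr0]
    field_simp
  -- Taylor bound
  obtain ⟨ε, hε, K, hK, hφcont, hbd⟩ := taylor2_bound' hφ
  refine ⟨(1/2) * deriv (deriv φ) ℓ₀, rfl, ε, hε, K * T, by positivity, ?_⟩
  intro ℓ hℓ hS
  set S := ⨆ t ∈ Icc (0:ℝ) T, |ℓ t - ℓ₀| with hSdef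
  -- pointwise bound by the sup
  have hbdd : BddAbove (range fun t => ⨆ (_ : t ∈ Icc (0:ℝ) T), |ℓ t - ℓ₀|) := by
    obtain ⟨Mb, hMb⟩ := (isCompact_Icc.image_of_continuousOn
      ((hℓ.sub (continuousOn_const (c := ℓ₀))).abs)).bddAbove
    refine ⟨max Mb 0, ?_⟩
    rintro y ⟨t, rfl⟩
    show (⨆ (_ : t ∈ Icc (0:ℝ) T), |ℓ t - ℓ₀|) ≤ max Mb 0
    by_cases ht : t ∈ Icc (0:ℝ) T
    · rw [ciSup_pos (f := fun _ : t ∈ Icc (0:ℝ) T => |ℓ t - ℓ₀|) ht]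
      exact le_max_of_le_left (hMb ⟨t, ht, rfl⟩)
    · haveI : IsEmpty (t ∈ Icc (0:ℝ) T) := isEmpty_Prop.mpr ht
      rw [Real.iSup_of_isEmpty]
      exact le_max_right _ _
  have hpt : ∀ t ∈ Icc (0:ℝ) T, |ℓ t - ℓ₀| ≤ S := by
    intro t ht
    have h := (ciSup_pos (f := fun _ : t ∈ Icc (0:ℝ) T => |ℓ t - ℓ₀|) ht).symm
    rw [h]
    exact le_ciSup hbdd t
  have hS0 : 0 ≤ S := le_trans (abs_nonneg _) (hpt 0 ⟨le_refl 0, hT.le⟩)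
  -- continuity / integrability
  have hmaps : MapsTo ℓ (Icc (0:ℝ) T) (closedBall ℓ₀ ε) := by
    intro t ht
    rw [mem_closedBall, Real.dist_eq]
    exact le_trans (hpt t ht) hS
  have hφℓ : ContinuousOn (fun t => φ (ℓ t)) (Icc (0:ℝ) T) := hφcont.comp hℓ hmaps
  have huIcc : uIcc (0:ℝ) T = Icc 0 T := uIcc_of_le hT.le
  have hint1 : IntervalIntegrable (fun t => φ (ℓ t)) volume 0 T := by
    apply ContinuousOn.intervalIntegrable; rwa [huIcc]
  have hint2 : IntervalIntegrable (fun t => ℓ t - ℓ₀) volume 0 T := by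
    apply ContinuousOn.intervalIntegrable; rw [huIcc]
    exact hℓ.sub continuousOn_const
  have hint3 : IntervalIntegrable (fun t => (ℓ t - ℓ₀)^2) volume 0 T := by
    apply ContinuousOn.intervalIntegrable; rw [huIcc]
    exact (hℓ.sub continuousOn_const).pow 2
  have hφ0 : φ ℓ₀ = α * a₀ + β * F ℓ₀ a₀ := by
    simp only [hφdef, hgl0]
  -- rewrite the difference as a single integral
  set c1 := deriv φ ℓ₀ with hc1def
  set c2 := (1/2) * deriv (deriv φ) ℓ₀ with hc2def
  have key : (∫ t in (0:ℝ)..T, φ (ℓ t)) - (α * a₀ + β * F ℓ₀ a₀) * T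
      - c1 * (∫ t in (0:ℝ)..T, (ℓ t - ℓ₀))
      - c2 * (∫ t in (0:ℝ)..T, (ℓ t - ℓ₀)^2)
      = ∫ t in (0:ℝ)..T,
          (φ (ℓ t) - φ ℓ₀ - c1 * (ℓ t - ℓ₀) - c2 * (ℓ t - ℓ₀)^2) := by
    rw [intervalIntegral.integral_sub ((hint1.sub intervalIntegrable_const).sub
          (hint2.const_mul c1)) (hint3.const_mul c2),
        intervalIntegral.integral_sub (hint1.sub intervalIntegrable_const)
          (hint2.const_mul c1),
        intervalIntegral.integral_sub hint1 intervalIntegrable_const,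
        intervalIntegral.integral_const, intervalIntegral.integral_const_mul,
        intervalIntegral.integral_const_mul, hφ0]
    simp only [smul_eq_mul, sub_zero]
    ring
  rw [hC1, key]
  have hfin : |∫ t in (0:ℝ)..T,
        (φ (ℓ t) - φ ℓ₀ - c1 * (ℓ t - ℓ₀) - c2 * (ℓ t - ℓ₀)^2)| ≤ (K * S^3) * |T - 0| := by
    rw [← Real.norm_eq_abs]
    apply intervalIntegral.norm_integral_le_of_norm_le_const
    intro t ht
    have ht' : t ∈ Icc (0:ℝ) T := Ioc_subset_Icc_self (by rwa [uIoc_of_le hT.le] at ht)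
    rw [Real.norm_eq_abs]
    calc |φ (ℓ t) - φ ℓ₀ - c1 * (ℓ t - ℓ₀) - c2 * (ℓ t - ℓ₀)^2|
        ≤ K * |ℓ t - ℓ₀|^3 := hbd (ℓ t) (le_trans (hpt t ht') hS)
      _ ≤ K * S^3 := by
          have h1 := hpt t ht'
          gcongr
  calc |∫ t in (0:ℝ)..T, (φ (ℓ t) - φ ℓ₀ - c1 * (ℓ t - ℓ₀) - c2 * (ℓ t - ℓ₀)^2)|
      ≤ (K * S^3) * |T - 0| := hfin
    _ = K * T * S^3 := by rw [sub_zero, abs_of_pos hT]; ring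
end

section
/- Let α, β ∈ ℝ. Let F : ℝ × ℝ → ℝ be continuously differentiable on a neighbourhood of (ℓ₀, a₀); let L, r, M : ℝ → ℝ be differentiable at θ₀ with L(θ₀) = ℓ₀, F(ℓ₀, a₀)·r(θ₀) = M(θ₀), r(θ₀)·∂F/∂a (ℓ₀, a₀) ≠ 0, and r₀ := L'(θ₀) ≠ 0. Let a⁎ : ℝ → ℝ be differentiable at θ₀ with a⁎(θ₀) = a₀ and F(L(θ), a⁎(θ))·r(θ) = M(θ) for all θ in a neighbourhood of θ₀. Then ( α·a⁎'(θ₀) + β·( ∂F/∂ℓ (ℓ₀,a₀)·r₀ + ∂F/∂a (ℓ₀,a₀)·a⁎'(θ₀) ) ) / r₀ = β·∂F/∂ℓ (ℓ₀,a₀) + ( α + β·∂F/∂a (ℓ₀,a₀) ) · ( M'(θ₀) − F(ℓ₀,a₀)·r'(θ₀) − r(θ₀)·∂F/∂ℓ (ℓ₀,a₀)·r₀ ) / ( r(θ₀)·∂F/∂a (ℓ₀,a₀)·r₀ ). -/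
open Filter

/-- Fully explicit formula for the drift coefficient
`C₁ = (α a⁎'(θ₀) + β (F_ℓ r₀ + F_a a⁎'(θ₀))) / r₀`
in terms of the local derivatives of `F`, `r`, `M`, `L` and the parameters
`α, β`, using the implicit-function formula for `a⁎'(θ₀)`. -/
theorem drift_coefficient_explicit
    (α β θ₀ a₀ ℓ₀ : ℝ)
    (F : ℝ → ℝ → ℝ)
    (hF : ContDiffAt ℝ 1 (fun p : ℝ × ℝ => F p.1 p.2) (ℓ₀, a₀))
    (L r M : ℝ → ℝ)
    (hL : DifferentiableAt ℝ L θ₀)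
    (hr : DifferentiableAt ℝ r θ₀)
    (hM : DifferentiableAt ℝ M θ₀)
    (hL0 : L θ₀ = ℓ₀)
    (hbal : F ℓ₀ a₀ * r θ₀ = M θ₀)
    (hnd : r θ₀ * deriv (fun x => F ℓ₀ x) a₀ ≠ 0)
    (hr0 : deriv L θ₀ ≠ 0)
    (astar : ℝ → ℝ)
    (hastar : DifferentiableAt ℝ astar θ₀)
    (ha0 : astar θ₀ = a₀)
    (heq : ∀ᶠ θ in nhds θ₀, F (L θ) (astar θ) * r θ = M θ) :
    (α * deriv astar θ₀
        + β * (deriv (fun x => F x a₀) ℓ₀ * deriv L θ₀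
                + deriv (fun x => F ℓ₀ x) a₀ * deriv astar θ₀))
      / deriv L θ₀
    = β * deriv (fun x => F x a₀) ℓ₀
      + (α + β * deriv (fun x => F ℓ₀ x) a₀)
        * (deriv M θ₀ - F ℓ₀ a₀ * deriv r θ₀
            - r θ₀ * deriv (fun x => F x a₀) ℓ₀ * deriv L θ₀)
        / (r θ₀ * deriv (fun x => F ℓ₀ x) a₀ * deriv L θ₀) := by
  have hrne : r θ₀ ≠ 0 := fun h => hnd (by rw [h]; ring)
  have hFa : deriv (fun x => F ℓ₀ x) a₀ ≠ 0 := fun h => hnd (by rw [h]; ring)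
  set f : ℝ × ℝ → ℝ := fun p => F p.1 p.2 with hf
  have hdF : HasFDerivAt f (fderiv ℝ f (ℓ₀, a₀)) (ℓ₀, a₀) :=
    (hF.differentiableAt one_ne_zero).hasFDerivAt
  set Fd := fderiv ℝ f (ℓ₀, a₀) with hFd
  -- partial derivatives
  have hpl : HasDerivAt (fun x => F x a₀) (Fd (1, 0)) ℓ₀ := by
    have h1 : HasDerivAt (fun x : ℝ => (x, a₀)) ((1 : ℝ), (0 : ℝ)) ℓ₀ :=
      (hasDerivAt_id ℓ₀).prodMk (hasDerivAt_const ℓ₀ a₀)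
    exact hdF.comp_hasDerivAt ℓ₀ h1
  have hpa : HasDerivAt (fun x => F ℓ₀ x) (Fd (0, 1)) a₀ := by
    have h1 : HasDerivAt (fun x : ℝ => (ℓ₀, x)) ((0 : ℝ), (1 : ℝ)) a₀ :=
      (hasDerivAt_const a₀ ℓ₀).prodMk (hasDerivAt_id a₀)
    exact hdF.comp_hasDerivAt a₀ h1
  have hplv : deriv (fun x => F x a₀) ℓ₀ = Fd (1, 0) := hpl.deriv
  have hpav : deriv (fun x => F ℓ₀ x) a₀ = Fd (0, 1) := hpa.deriv
  -- derivative of composition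
  have hcomp : HasDerivAt (fun θ => F (L θ) (astar θ))
      (Fd (deriv L θ₀, deriv astar θ₀)) θ₀ := by
    have h1 : HasDerivAt (fun θ => (L θ, astar θ)) (deriv L θ₀, deriv astar θ₀) θ₀ :=
      hL.hasDerivAt.prodMk hastar.hasDerivAt
    have hdF' : HasFDerivAt f Fd (L θ₀, astar θ₀) := by rw [hL0, ha0]; exact hdF
    exact hdF'.comp_hasDerivAt θ₀ h1
  have hlin : Fd (deriv L θ₀, deriv astar θ₀)
      = deriv L θ₀ * Fd (1, 0) + deriv astar θ₀ * Fd (0, 1) := by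
    have : (deriv L θ₀, deriv astar θ₀)
        = deriv L θ₀ • ((1 : ℝ), (0 : ℝ)) + deriv astar θ₀ • ((0 : ℝ), (1 : ℝ)) := by
      simp
    rw [this, map_add, map_smul, map_smul]
    simp [smul_eq_mul]
  have hprod : HasDerivAt (fun θ => F (L θ) (astar θ) * r θ)
      (Fd (deriv L θ₀, deriv astar θ₀) * r θ₀
        + F ℓ₀ a₀ * deriv r θ₀) θ₀ := by
    have := hcomp.mul hr.hasDerivAt
    rw [hL0, ha0] at this; exact this
  have hMd : HasDerivAt M (Fd (deriv L θ₀, deriv astar θ₀) * r θ₀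
      + F ℓ₀ a₀ * deriv r θ₀) θ₀ := by
    refine HasDerivAt.congr_of_eventuallyEq hprod ?_
    filter_upwards [heq] with θ hθ using hθ.symm
  have key : Fd (deriv L θ₀, deriv astar θ₀) * r θ₀ + F ℓ₀ a₀ * deriv r θ₀
      = deriv M θ₀ := hMd.deriv.symm
  rw [hlin] at key
  rw [hplv, hpav]
  have hFa' : Fd (0, 1) ≠ 0 := hpav ▸ hFa
  field_simp
  linear_combination (α + β * Fd (0, 1)) * key
end
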